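/- arXiv:2003.02002 — 3 statements merged into one kernel-verified Lean document; each statement's English description precedes it below -/
import Mathlib

section
/- Let K be a field, k ≥ 1, and n = 2k−1. Let C ≤ U^n(K) be a K-subspace such that every nonzero Δ ∈ C satisfies frk(Δ) ≥ k². Then dim_K(C) ≤ k. -/
/-- The space `U^n(K)` of upper triangular `n × n` matrices over `K`,
as a `K`-subspace of the matrix space. -/
def UT (K : Type*) [Field K] (n : ℕ) : Submodule K (Matrix (Fin n) (Fin n) K) where
  carrier := {A | ∀ i j : Fin n, (j : ℕ) < (i : ℕ) → A i j = 0}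
  add_mem' := by
    intro a b ha hb i j h
    simp [Matrix.add_apply, ha i j h, hb i j h]
  zero_mem' := by
    intro i j h
    simp
  smul_mem' := by
    intro c a ha i j h
    simp [Matrix.smul_apply, ha i j h]

/-- For `Δ ∈ U^n(K)` and `i : Fin n` (representing the 1-indexed value `i+1`),
the upper-right corner submatrix `Δ_[i+1] ∈ K^{(i+1) × (n+1-(i+1))}`,
consisting of the entries `Δ_{k,ℓ}` with (1-indexed) `1 ≤ k ≤ i+1`, `i+1 ≤ ℓ ≤ n`. -/
def corner {K : Type*} [Field K] {n : ℕ} (Δ : Matrix (Fin n) (Fin n) K) (i : Fin n) :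
    Matrix (Fin ((i : ℕ) + 1)) (Fin (n + 1 - ((i : ℕ) + 1))) K :=
  Matrix.of fun k l =>
    Δ ⟨k, by have := k.isLt; have := i.isLt; omega⟩
      ⟨(i : ℕ) + l, by have := l.isLt; have := i.isLt; omega⟩

/-- The flag rank of an upper triangular matrix: the sum of the ranks of its
upper-right corner submatrices, `frk Δ = Σ_{i=1}^{n} rank Δ_[i]`. -/
noncomputable def frk {K : Type*} [Field K] {n : ℕ} (Δ : Matrix (Fin n) (Fin n) K) : ℕ :=
  ∑ i : Fin n, (corner Δ i).rank


lemma rank_le_sub_one_of_col_zero {K : Type*} [Field K] {a b : ℕ}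
    (M : Matrix (Fin a) (Fin b) K) (j : Fin b) (hM : ∀ r, M r j = 0) :
    M.rank ≤ b - 1 := by
  classical
  set M' : Matrix (Fin a) {x : Fin b // x ≠ j} K := M.submatrix id Subtype.val with hM'
  have hsub : LinearMap.range M.mulVecLin ≤ LinearMap.range M'.mulVecLin := by
    rintro x ⟨v, rfl⟩
    refine ⟨fun x => v x.1, ?_⟩
    ext i
    simp only [Matrix.mulVecLin_apply, Matrix.mulVec, dotProduct, hM',
      Matrix.submatrix_apply, id]
    rw [← Finset.sum_erase_add Finset.univ _ (Finset.mem_univ j), hM i, zero_mul, add_zero]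
    rw [Finset.sum_subtype (Finset.univ.erase j) (p := fun x => x ≠ j)
      (by simp) (fun x => M i x * v x)]
  have h1 : M.rank ≤ M'.rank := by
    rw [Matrix.rank, Matrix.rank]
    exact Submodule.finrank_mono hsub
  have h2 : M'.rank ≤ Fintype.card {x : Fin b // x ≠ j} := Matrix.rank_le_card_width M'
  have h3 : Fintype.card {x : Fin b // x ≠ j} = b - 1 := by
    simp [Fintype.card_subtype_compl]
  omega

lemma sum_min_eq (k : ℕ) :
    ∑ i ∈ Finset.range (2 * k - 1), min (i + 1) (2 * k - 1 - i) = k ^ 2 := by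
  induction k with
  | zero => simp
  | succ k ih =>
    rcases Nat.eq_zero_or_pos k with rfl | hk
    · simp
    · have h2 : 2 * (k + 1) - 1 = (2 * k - 1 + 1) + 1 := by omega
      rw [h2, Finset.sum_range_succ, Finset.sum_range_succ']
      have hcong : ∀ i ∈ Finset.range (2 * k - 1),
          min (i + 1 + 1) (2 * k - 1 + 1 + 1 - (i + 1)) = min (i + 1) (2 * k - 1 - i) + 1 := by
        intro i hi
        have := Finset.mem_range.mp hi
        omega
      rw [Finset.sum_congr rfl hcong, Finset.sum_add_distrib, ih, Finset.sum_const,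
        Finset.card_range]
      have e1 : min (0 + 1) (2 * k - 1 + 1 + 1 - 0) = 1 := by omega
      have e2 : min (2 * k - 1 + 1 + 1) (2 * k - 1 + 1 + 1 - (2 * k - 1 + 1)) = 1 := by omega
      rw [e1, e2]
      simp only [smul_eq_mul, mul_one]
      have : (k+1)^2 = k^2 + 2*k+1 := by ring
      omega

/-- Even case `n + 1 = 2k`: any flag rank metric code `C ≤ U^n(K)` whose nonzero elements
all have flag rank at least `k²` (i.e. with minimum distance `k²`) has dimension at most
`k`. -/
theorem dim_le_of_maxdist_even {K : Type*} [Field K] (k : ℕ) (hk : 1 ≤ k)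
    (C : Submodule K (Matrix (Fin (2 * k - 1)) (Fin (2 * k - 1)) K))
    (hC : C ≤ UT K (2 * k - 1))
    (hmin : ∀ Δ ∈ C, Δ ≠ 0 → k ^ 2 ≤ frk Δ) :
    Module.finrank K ↥C ≤ k := by
  classical
  have hkn : k - 1 < 2 * k - 1 := by omega
  let φ : C →ₗ[K] (Fin k → K) :=
    { toFun := fun Δ r => (Δ : Matrix (Fin (2 * k - 1)) (Fin (2 * k - 1)) K)
        ⟨r, by have := r.isLt; omega⟩ ⟨k - 1, hkn⟩
      map_add' := by intro a b; ext r; simp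
      map_smul' := by intro c a; ext r; simp }
  have hinj : Function.Injective φ := by
    rw [injective_iff_map_eq_zero]
    intro Δ hφ
    by_contra hΔ0
    have hne : (Δ : Matrix (Fin (2 * k - 1)) (Fin (2 * k - 1)) K) ≠ 0 := by
      simpa [ZeroMemClass.coe_eq_zero] using hΔ0
    have hfrk := hmin Δ.1 Δ.2 hne
    set M : Matrix (Fin (2 * k - 1)) (Fin (2 * k - 1)) K := Δ.1 with hM
    -- per-term bound
    have key : ∀ i : Fin (2 * k - 1),
        (corner M i).rank ≤ min ((i : ℕ) + 1) (2 * k - 1 - (i : ℕ)) := by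
      intro i
      have h1 : (corner M i).rank ≤ (i : ℕ) + 1 := by
        simpa using (corner M i).rank_le_card_height
      have h2 : (corner M i).rank ≤ 2 * k - 1 + 1 - ((i : ℕ) + 1) := by
        simpa using (corner M i).rank_le_card_width
      have := i.isLt
      omega
    set mid : Fin (2 * k - 1) := ⟨k - 1, hkn⟩ with hmid
    have h0 : 0 < 2 * k - 1 + 1 - ((k - 1) + 1) := by omega
    have hcol : ∀ r : Fin ((k - 1) + 1), corner M mid r ⟨0, h0⟩ = 0 := by
      intro r
      have hr : (r : ℕ) < k := by have := r.isLt; omega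
      have := congrFun hφ ⟨r.1, hr⟩
      simpa [φ, corner, mid] using this
    have hmidlt : (corner M mid).rank < min ((mid : ℕ) + 1) (2 * k - 1 - (mid : ℕ)) := by
      have := rank_le_sub_one_of_col_zero (corner M mid) ⟨0, h0⟩ hcol
      have hmidv : (mid : ℕ) = k - 1 := rfl
      omega
    have hlt : frk M < k ^ 2 := by
      have hsum : frk M < ∑ i : Fin (2 * k - 1), min ((i : ℕ) + 1) (2 * k - 1 - (i : ℕ)) :=
        Finset.sum_lt_sum (fun i _ => key i) ⟨mid, Finset.mem_univ _, hmidlt⟩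
      have heq : ∑ i : Fin (2 * k - 1), min ((i : ℕ) + 1) (2 * k - 1 - (i : ℕ))
          = ∑ i ∈ Finset.range (2 * k - 1), min (i + 1) (2 * k - 1 - i) :=
        Fin.sum_univ_eq_sum_range (fun i => min (i + 1) (2 * k - 1 - i)) (2 * k - 1)
      calc frk M < _ := hsum
        _ = k ^ 2 := by rw [heq, sum_min_eq]
    omega
  have := LinearMap.finrank_le_finrank_of_injective hinj
  simpa using this
end

section
/- Let K be a field, k ≥ 1, and n = 2k. If there exists a field extension F of K with [F : K] = k (i.e., F is a field that is a K-algebra of dimension k over K), then there exists a K-subspace C ≤ U^n(K) with dim_K(C) = k such that every nonzero Δ ∈ C satisfies frk(Δ) = k(k+1). -/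
/-!
Multiplication by the elements of `F` in a `K`-basis gives a `k`-dimensional space of `k × k`
matrices in which every nonzero matrix `M` is invertible. Put `M` in the top-right `k × k` block
of a `2k × 2k` matrix. For `i ≤ k` the `i`-th corner contains the first `i` rows of `M` in full,
and for `i > k` it contains `2k + 1 - i` full columns of `M`; both families are linearly
independent, so the corner ranks are `min i (2k + 1 - i)`, which sum to `k(k+1)`.
-/

open Finset

namespace Matrix

variable {K m n m₀ n₀ : Type*} [Field K] [Fintype m] [Fintype n]

theorem rank_eq_card_height_of_linearIndependent_submatrix_row (A : Matrix m n K)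
    (c : n₀ → n) (h : LinearIndependent K (A.submatrix id c).row) :
    A.rank = Fintype.card m :=
  (h.of_comp (LinearMap.funLeft K K c)).rank_matrix

theorem rank_eq_card_width_of_linearIndependent_submatrix_col (A : Matrix m n K)
    (r : m₀ → m) (h : LinearIndependent K (A.submatrix r id).col) :
    A.rank = Fintype.card n := by
  rw [← rank_transpose]
  exact Aᵀ.rank_eq_card_height_of_linearIndependent_submatrix_row r h

end Matrix

section TopRightBlock

variable {R : Type*} [CommSemiring R]

variable (R) in
def topRightBlock (k : ℕ) :
    Matrix (Fin k) (Fin k) R →ₗ[R] Matrix (Fin (2 * k)) (Fin (2 * k)) R where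
  toFun M := Matrix.of fun i j =>
    if h : (i : ℕ) < k ∧ k ≤ (j : ℕ) then M ⟨i, h.1⟩ ⟨j - k, by omega⟩ else 0
  map_add' M N := by
    ext i j
    simp only [Matrix.of_apply, Matrix.add_apply]
    split_ifs <;> simp
  map_smul' c M := by
    ext i j
    simp only [Matrix.of_apply, Matrix.smul_apply, RingHom.id_apply]
    split_ifs <;> simp

variable {k : ℕ} (M : Matrix (Fin k) (Fin k) R)

theorem topRightBlock_apply_eq {i j : Fin (2 * k)} (r c : Fin k) (hi : (i : ℕ) = r)
    (hj : (j : ℕ) = c + k) : topRightBlock R k M i j = M r c := by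
  refine (dif_pos ⟨by omega, by omega⟩).trans ?_
  congr 1
  · exact Fin.ext hi
  · exact Fin.ext (by simp only; omega)

theorem topRightBlock_injective : Function.Injective (topRightBlock R k) := by
  intro M N h
  ext r c
  have := congrFun₂ h ⟨r, by omega⟩ ⟨c + k, by omega⟩
  rwa [topRightBlock_apply_eq M r c rfl rfl, topRightBlock_apply_eq N r c rfl rfl] at this

theorem topRightBlock_mem_UT {K : Type*} [Field K] (M : Matrix (Fin k) (Fin k) K) :
    topRightBlock K k M ∈ UT K (2 * k) :=
  fun _ _ hji => dif_neg (by omega)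

end TopRightBlock

theorem sum_min_succ_two_mul_sub (k : ℕ) :
    ∑ i : Fin (2 * k), min ((i : ℕ) + 1) (2 * k - i) = k * (k + 1) := by
  rw [Fin.sum_univ_eq_sum_range (fun v => min (v + 1) (2 * k - v)), two_mul, sum_range_add]
  have lower : ∑ v ∈ range k, min (v + 1) (k + k - v) = ∑ v ∈ range k, (v + 1) :=
    sum_congr rfl fun v hv => by simp only [mem_range] at hv; omega
  have upper :
      ∑ v ∈ range k, min (k + v + 1) (k + k - (k + v)) = ∑ v ∈ range k, (v + 1) := by
    rw [← sum_range_reflect]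
    exact sum_congr rfl fun v hv => by simp only [mem_range] at hv; omega
  have gauss := sum_range_id_mul_two (k + 1)
  rw [sum_range_succ'] at gauss
  simp only [add_zero, add_tsub_cancel_right] at gauss
  rw [lower, upper]
  linarith

section Corner

variable {K : Type*} [Field K] {k : ℕ}

theorem rank_corner_topRightBlock {M : Matrix (Fin k) (Fin k) K} (hM : IsUnit M) (i : Fin (2 * k)) :
    (corner (topRightBlock K k M) i).rank = min ((i : ℕ) + 1) (2 * k - i) := by
  rcases lt_or_ge (i : ℕ) k with hi | hi
  · let cols : Fin k → Fin (2 * k + 1 - ((i : ℕ) + 1)) := fun c => ⟨c + k - i, by omega⟩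
    have hrows : LinearIndependent K ((corner (topRightBlock K k M) i).submatrix id cols).row := by
      have hrow : ((corner (topRightBlock K k M) i).submatrix id cols).row =
          M.row ∘ Fin.castLE hi := by
        ext r c
        exact topRightBlock_apply_eq M _ _ rfl (by simp only [cols]; omega)
      rw [hrow]
      exact (M.linearIndependent_rows_of_isUnit hM).comp _ (Fin.castLE_injective hi)
    rw [min_eq_left (by omega),
      Matrix.rank_eq_card_height_of_linearIndependent_submatrix_row _ _ hrows, Fintype.card_fin]
  · let cols : Fin (2 * k + 1 - ((i : ℕ) + 1)) → Fin k := fun c => ⟨i + c - k, by omega⟩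
    have hcols : LinearIndependent K ((corner (topRightBlock K k M) i).submatrix
        (Fin.castLE (show k ≤ (i : ℕ) + 1 by omega)) id).col := by
      have hcol : ((corner (topRightBlock K k M) i).submatrix
          (Fin.castLE (show k ≤ (i : ℕ) + 1 by omega)) id).col = M.col ∘ cols := by
        ext c r
        exact topRightBlock_apply_eq M _ _ rfl (by simp only [id_eq, cols]; omega)
      rw [hcol]
      exact (M.linearIndependent_cols_of_isUnit hM).comp cols
        (fun a b hab => by simp only [cols, Fin.ext_iff] at hab ⊢; omega)
    rw [min_eq_right (by omega),
      Matrix.rank_eq_card_width_of_linearIndependent_submatrix_col _ _ hcols, Fintype.card_fin]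
    omega

theorem frk_topRightBlock {M : Matrix (Fin k) (Fin k) K} (hM : IsUnit M) :
    frk (topRightBlock K k M) = k * (k + 1) := by
  simp only [frk, rank_corner_topRightBlock hM]
  exact sum_min_succ_two_mul_sub k

end Corner

/-- Odd case `n + 1 = 2k + 1`: if `K` admits a field extension `F` of degree `k`, then
there is a flag rank metric code `C ≤ U^n(K)` of dimension `k` all of whose nonzero
elements have flag rank exactly `k(k+1)` (so with minimum distance `k(k+1)`). -/
theorem exists_maxdist_code_odd {K : Type*} [Field K] (k : ℕ) (hk : 1 ≤ k)
    (F : Type*) [Field F] [Algebra K F] (hF : Module.finrank K F = k) :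
    ∃ C : Submodule K (Matrix (Fin (2 * k)) (Fin (2 * k)) K),
      C ≤ UT K (2 * k) ∧ Module.finrank K ↥C = k ∧
        ∀ Δ ∈ C, Δ ≠ 0 → frk Δ = k * (k + 1) := by
  have : FiniteDimensional K F := Module.finite_of_finrank_pos (by omega)
  let b : Module.Basis (Fin k) K F := (Module.finBasis K F).reindex (finCongr hF)
  let L := topRightBlock K k ∘ₗ (Algebra.leftMulMatrix b).toLinearMap
  have hL : Function.Injective L :=
    topRightBlock_injective.comp (Algebra.leftMulMatrix_injective b)
  refine ⟨LinearMap.range L, ?_, ?_, ?_⟩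
  · rintro _ ⟨x, rfl⟩
    exact topRightBlock_mem_UT _
  · rw [LinearMap.finrank_range_of_inj hL, hF]
  · rintro _ ⟨x, rfl⟩ hne
    have hx : x ≠ 0 := by
      rintro rfl
      exact hne (map_zero L)
    exact frk_topRightBlock ((IsUnit.mk0 x hx).map (Algebra.leftMulMatrix b))
end

section
/- Let K be a field and Γ, Δ ∈ U^n(K). For each 1 ≤ i ≤ n let U_i ≤ K^{n+1} be the span of the first i rows of Φ(Γ) and W_i ≤ K^{n+1} the span of the first i rows of Φ(Δ). Then Σ_{i=1}^{n} d(U_i, W_i) = Σ_{i=1}^{n} rank(M_i), where M_i ∈ K^{i×(n+1−i)} is the submatrix of Φ(Γ)·Φ(Δ)^{−1} formed by rows 1, …, i and columns i+1, …, n+1, and d is the Grassmann distance. (Equivalently, the distance between the two full flags equals frk(Φ^{−1}(Φ(Γ)Φ(Δ)^{−1})).) -/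
/-- The unitriangular `(n+1) × (n+1)` matrix `Φ(Δ)` attached to `Δ ∈ U^n(K)`:
`Φ(Δ)_{i,i} = 1`, `Φ(Δ)_{i,j+1} = Δ_{i,j}` for `1 ≤ i ≤ j ≤ n` (1-indexed), and all
other entries `0`. -/
def Phi {K : Type*} [Field K] {n : ℕ} (Δ : Matrix (Fin n) (Fin n) K) :
    Matrix (Fin (n + 1)) (Fin (n + 1)) K :=
  Matrix.of fun r c =>
    if (r : ℕ) = (c : ℕ) then 1
    else if h : (r : ℕ) < (c : ℕ) then
      Δ ⟨r, by have := c.isLt; omega⟩ ⟨(c : ℕ) - 1, by have := c.isLt; omega⟩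
    else 0

open Module

open Submodule

section GrassmannDistance

variable {K V V' : Type*} [Field K] [AddCommGroup V] [Module K V] [AddCommGroup V'] [Module K V']

theorem finrank_map_add_finrank_inf_ker [FiniteDimensional K V] (π : V →ₗ[K] V')
    (P : Submodule K V) :
    finrank K (P.map π) + finrank K ↥(P ⊓ LinearMap.ker π) = finrank K P := by
  rw [← LinearMap.range_domRestrict, ← map_comap_subtype, finrank_map_subtype_eq,
    ← LinearMap.ker_domRestrict]
  exact LinearMap.finrank_range_add_finrank_ker _

theorem finrank_sup_sub_finrank_inf_eq_two_mul_finrank_map [FiniteDimensional K V]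
    (π : V →ₗ[K] V') {P Q : Submodule K V} (hQ : LinearMap.ker π = Q)
    (hPQ : finrank K P = finrank K Q) :
    finrank K ↥(P ⊔ Q) - finrank K ↥(P ⊓ Q) = 2 * finrank K (P.map π) := by
  have hπ := finrank_map_add_finrank_inf_ker π P
  have hsup := finrank_sup_add_finrank_inf_eq P Q
  subst hQ
  omega

theorem finrank_map_sup_sub_finrank_map_inf {f : V →ₗ[K] V'} (hf : Function.Injective f)
    (P Q : Submodule K V) :
    finrank K ↥(P.map f ⊔ Q.map f) - finrank K ↥(P.map f ⊓ Q.map f) =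
      finrank K ↥(P ⊔ Q) - finrank K ↥(P ⊓ Q) := by
  rw [← Submodule.map_sup, ← map_inf f hf, (equivMapOfInjective f hf _).finrank_eq.symm,
    (equivMapOfInjective f hf _).finrank_eq.symm]

end GrassmannDistance

section RowSpaces

variable {K ι α β : Type*} [Field K]

theorem ker_funLeft_eq_span_basisFun_image [Finite ι] (c : β → ι) :
    LinearMap.ker (LinearMap.funLeft K K c) = span K (Pi.basisFun K ι '' (Set.range c)ᶜ) := by
  ext v
  simp only [LinearMap.mem_ker, (Pi.basisFun K ι).mem_span_image, Set.subset_def,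
    Finset.mem_coe, Finsupp.mem_support_iff, Pi.basisFun_repr, funext_iff, LinearMap.funLeft_apply,
    Pi.zero_apply, Set.mem_compl_iff, Set.mem_range]
  exact ⟨fun h i hi ⟨b, hb⟩ => hi (hb ▸ h b), fun h b => not_not.1 fun hb => h _ hb ⟨b, rfl⟩⟩

theorem finrank_span_rows_of_isUnit [Fintype ι] [DecidableEq ι] [Fintype α] {C : Matrix ι ι K}
    (hC : IsUnit C) {r : α → ι} (hr : Function.Injective r) :
    finrank K (span K (Set.range (C ∘ r))) = Fintype.card α :=
  finrank_span_eq_card ((Matrix.linearIndependent_rows_iff_isUnit.2 hC).comp r hr)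

theorem map_vecMulLinear_span_rows [Fintype ι] (A N : Matrix ι ι K) (r : α → ι) :
    (span K (Set.range (A ∘ r))).map (Matrix.vecMulLinear N) =
      span K (Set.range ((A * N) ∘ r)) := by
  rw [map_span, ← Set.range_comp]
  congr 2

theorem rank_submatrix_eq_finrank_map_funLeft [Fintype α] [Fintype β] (C : Matrix ι ι K)
    (r : α → ι) (c : β → ι) :
    (C.submatrix r c).rank =
      finrank K ((span K (Set.range (C ∘ r))).map (LinearMap.funLeft K K c)) := by
  rw [Matrix.rank_eq_finrank_span_row, map_span, ← Set.range_comp]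
  rfl

end RowSpaces

section Flags

variable {K ι α β : Type*} [Field K] [Fintype ι] [DecidableEq ι] [Fintype α] [Fintype β]

theorem finrank_span_rows_sup_sub_inf_span_basisFun {C : Matrix ι ι K} (hC : IsUnit C)
    {r : α → ι} (hr : Function.Injective r) {c : β → ι} (hrc : Set.range c = (Set.range r)ᶜ) :
    finrank K ↥(span K (Set.range (C ∘ r)) ⊔ span K (Set.range (Pi.basisFun K ι ∘ r))) -
        finrank K ↥(span K (Set.range (C ∘ r)) ⊓ span K (Set.range (Pi.basisFun K ι ∘ r))) =
      2 * (C.submatrix r c).rank := by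
  rw [rank_submatrix_eq_finrank_map_funLeft]
  apply finrank_sup_sub_finrank_inf_eq_two_mul_finrank_map
  · rw [ker_funLeft_eq_span_basisFun_image, hrc, compl_compl, Set.range_comp]
  · rw [finrank_span_rows_of_isUnit hC hr,
      finrank_span_eq_card ((Pi.basisFun K ι).linearIndependent.comp r hr)]

theorem finrank_span_rows_sup_sub_inf {C D : Matrix ι ι K} (hC : IsUnit C) (hD : IsUnit D)
    {r : α → ι} (hr : Function.Injective r) {c : β → ι} (hrc : Set.range c = (Set.range r)ᶜ) :
    finrank K ↥(span K (Set.range (C ∘ r)) ⊔ span K (Set.range (D ∘ r))) -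
        finrank K ↥(span K (Set.range (C ∘ r)) ⊓ span K (Set.range (D ∘ r))) =
      2 * ((C * D⁻¹).submatrix r c).rank := by
  have hD' : IsUnit D⁻¹ := Matrix.isUnit_nonsing_inv_iff.2 hD
  have one_eq_basisFun : (1 : Matrix ι ι K) = fun i => Pi.basisFun K ι i := by
    ext i j
    simp [Matrix.one_eq_pi_single]
  rw [← finrank_map_sup_sub_finrank_map_inf (f := Matrix.vecMulLinear D⁻¹)
      (Matrix.vecMul_injective_iff_isUnit.2 hD'),
    map_vecMulLinear_span_rows, map_vecMulLinear_span_rows,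
    Matrix.mul_nonsing_inv D ((Matrix.isUnit_iff_isUnit_det D).1 hD), one_eq_basisFun]
  exact finrank_span_rows_sup_sub_inf_span_basisFun (hC.mul hD') hr hrc

end Flags

theorem isUnit_Phi {K : Type*} [Field K] {n : ℕ} (Δ : Matrix (Fin n) (Fin n) K) :
    IsUnit (Phi Δ) := by
  have upper : (Phi Δ).IsUpperTriangular := fun r c (h : c < r) => by
    simp [Phi, Fin.val_ne_of_ne h.ne', not_lt.2 h.le]
  rw [Matrix.isUnit_iff_isUnit_det, Matrix.det_of_isUpperTriangular upper]
  simp [Phi]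

theorem setOf_exists_le_eq_range_comp_castLE {V : Type*} {m n : ℕ} (h : m + 1 ≤ n + 1)
    (A : Fin (n + 1) → V) :
    {v | ∃ r : Fin (n + 1), (r : ℕ) ≤ m ∧ v = A r} = Set.range (A ∘ Fin.castLE h) := by
  rw [Set.range_comp, Fin.range_castLE]
  ext v
  simp [eq_comm]

theorem range_natAdd_eq_compl_range_castLE {m n : ℕ} (h : m + 1 ≤ n + 1) :
    Set.range (fun k : Fin (n - m) => (⟨m + 1 + k, by omega⟩ : Fin (n + 1))) =
      (Set.range (Fin.castLE h))ᶜ := by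
  rw [Fin.range_castLE]
  ext j
  simp only [Set.mem_range, Set.mem_compl_iff, Set.mem_ofPred_eq, not_lt]
  exact ⟨fun ⟨k, hk⟩ => hk ▸ by simp,
    fun hj => ⟨⟨j - (m + 1), by omega⟩, Fin.ext (by simp; omega)⟩⟩

/-- For `Γ, Δ ∈ U^n(K)`, let `U_i` (resp. `W_i`) be the span of the first `i` rows of
`Φ(Γ)` (resp. `Φ(Δ)`), and let `M_i ∈ K^{i×(n+1-i)}` be the submatrix of
`Φ(Γ) · Φ(Δ)⁻¹` formed by rows `1, …, i` and columns `i+1, …, n+1` (1-indexed).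
Then `Σ_{i=1}^{n} d(U_i, W_i) = Σ_{i=1}^{n} rank M_i`, where `d` is the Grassmann
distance `d(U,W) = (dim(U+W) - dim(U∩W))/2`; the statement is expressed with both
sides multiplied by `2`. -/
theorem sum_grassmann_distance_flags_eq_sum_rank {K : Type*} [Field K] {n : ℕ}
    (Γ Δ : Matrix (Fin n) (Fin n) K)
    (U W : Fin n → Submodule K (Fin (n + 1) → K))
    (hU : ∀ i : Fin n, U i =
      Submodule.span K {v | ∃ r : Fin (n + 1), (r : ℕ) ≤ (i : ℕ) ∧ v = Phi Γ r})
    (hW : ∀ i : Fin n, W i =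
      Submodule.span K {v | ∃ r : Fin (n + 1), (r : ℕ) ≤ (i : ℕ) ∧ v = Phi Δ r})
    (M : (i : Fin n) → Matrix (Fin ((i : ℕ) + 1)) (Fin (n - (i : ℕ))) K)
    (hM : ∀ (i : Fin n) (r : Fin ((i : ℕ) + 1)) (c : Fin (n - (i : ℕ))),
      M i r c = (Phi Γ * (Phi Δ)⁻¹)
        ⟨r, by have := r.isLt; have := i.isLt; omega⟩
        ⟨(i : ℕ) + 1 + c, by have := c.isLt; have := i.isLt; omega⟩) :
    ∑ i : Fin n, (finrank K ↥(U i ⊔ W i) - finrank K ↥(U i ⊓ W i)) =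
      2 * ∑ i : Fin n, (M i).rank := by
  rw [Finset.mul_sum]
  refine Finset.sum_congr rfl fun i _ => ?_
  have hi : (i : ℕ) + 1 ≤ n + 1 := by omega
  have hMi : M i = (Phi Γ * (Phi Δ)⁻¹).submatrix (Fin.castLE hi)
      (fun k : Fin (n - i) => (⟨(i : ℕ) + 1 + k, by omega⟩ : Fin (n + 1))) := Matrix.ext (hM i)
  rw [hU, hW, setOf_exists_le_eq_range_comp_castLE hi (Phi Γ),
    setOf_exists_le_eq_range_comp_castLE hi (Phi Δ), hMi]
  exact finrank_span_rows_sup_sub_inf (isUnit_Phi Γ) (isUnit_Phi Δ) (Fin.castLE_injective hi)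
    (range_natAdd_eq_compl_range_castLE hi)
end
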